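/- Let λ = (a₁, …, a_j) be a partition with j parts and fix an integer k ≥ 1. Then λ can be decomposed as the vertical sum over 1 ≤ i ≤ ⌈j/k⌉ of partitions Rect(k·hᵢ, k) +_H νᵢ, for suitable integers hᵢ ≥ 0 and partitions νᵢ with at most k parts, such that Σᵢ |νᵢ| ≤ k·(a₁ + j). -/

import Mathlib

/-- Sort the parts of a partition in weakly decreasing order. -/
def sortD (s : Multiset ℕ) : List ℕ := (s.sort (· ≤ ·)).reverse

/-- Pad a list with zeros up to length `n`. -/
def padZero (l : List ℕ) (n : ℕ) : List ℕ := l ++ List.replicate (n - l.length) 0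

/-- The horizontal sum of two partitions (given as multisets of parts):
add the parts coordinatewise after sorting in decreasing order. -/
def hSum (s t : Multiset ℕ) : Multiset ℕ :=
  ((List.zipWith (· + ·) (padZero (sortD s) (max (Multiset.card s) (Multiset.card t)))
      (padZero (sortD t) (max (Multiset.card s) (Multiset.card t))) : List ℕ) :
    Multiset ℕ).filter (0 < ·)

/-- The rectangular partition `Rect(a, b)` with `b` rows each of length `a`. -/
def rect (a b : ℕ) : Multiset ℕ := Multiset.replicate b a

lemma zipWith_replicate_left' (f : ℕ → ℕ → ℕ) (a : ℕ) :
    ∀ (l : List ℕ) (n : ℕ), l.length = n → List.zipWith f (List.replicate n a) l = l.map (f a)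
  | [], _, h => by subst h; rfl
  | x :: xs, n, h => by
      subst h
      simp [List.replicate_succ, zipWith_replicate_left' f a xs xs.length rfl]

lemma sortD_coe (t : Multiset ℕ) : (↑(sortD t) : Multiset ℕ) = t := by
  simp [sortD, Multiset.coe_reverse, Multiset.sort_eq]

lemma sortD_length (t : Multiset ℕ) : (sortD t).length = Multiset.card t := by
  rw [← Multiset.coe_card, sortD_coe]

lemma sortD_rect (c k : ℕ) : sortD (rect c k) = List.replicate k c := by
  rw [List.eq_replicate_iff]
  constructor
  · rw [sortD_length]; simp [rect]
  · intro b hb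
    have : b ∈ (↑(sortD (rect c k)) : Multiset ℕ) := by exact_mod_cast hb
    rw [sortD_coe] at this
    exact Multiset.eq_of_mem_replicate this

lemma padZero_coe (l : List ℕ) (n : ℕ) :
    (↑(padZero l n) : Multiset ℕ) = (l : Multiset ℕ) + Multiset.replicate (n - l.length) 0 := by
  rw [padZero, ← Multiset.coe_add, ← Multiset.coe_replicate]

lemma key_hSum (c k : ℕ) (B : Multiset ℕ) (hcard : Multiset.card B ≤ k)
    (hck : Multiset.card B = k ∨ c = 0) (hle : ∀ x ∈ B, c ≤ x) (hpos : ∀ x ∈ B, 0 < x) :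
    hSum (rect c k) ((B.map (· - c)).filter (0 < ·)) = B := by
  set t : Multiset ℕ := (B.map (· - c)).filter (0 < ·) with ht
  have htcard : Multiset.card t ≤ k := by
    calc Multiset.card t ≤ Multiset.card (B.map (· - c)) := Multiset.card_le_card (Multiset.filter_le _ _)
    _ = Multiset.card B := Multiset.card_map _ _
    _ ≤ k := hcard
  have hmax : max (Multiset.card (rect c k)) (Multiset.card t) = k := by
    simp [rect, htcard]
  have hlen : (padZero (sortD t) k).length = k := by
    simp [padZero, sortD_length]; omega
  have hrect : padZero (sortD (rect c k)) k = List.replicate k c := by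
    simp [padZero, sortD_rect, List.length_replicate]
  rw [hSum, hmax, hrect, zipWith_replicate_left' (· + ·) c _ _ hlen]
  rw [← Multiset.map_coe, padZero_coe, sortD_coe, sortD_length]
  rw [Multiset.map_add, Multiset.map_replicate, Multiset.filter_add]
  -- decompose B.map (· - c)
  have hsplit : t + Multiset.filter (fun y => ¬ 0 < y) (B.map (· - c)) = B.map (· - c) :=
    Multiset.filter_add_not _ _
  have hzero : Multiset.filter (fun y => ¬ 0 < y) (B.map (· - c)) =
      Multiset.replicate (Multiset.card B - Multiset.card t) 0 := by
    rw [Multiset.eq_replicate]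
    constructor
    · have := congrArg Multiset.card hsplit
      rw [Multiset.card_add, Multiset.card_map] at this
      omega
    · intro b hb
      have := (Multiset.mem_filter.1 hb).2
      omega
  have hBmap : (t + Multiset.replicate (Multiset.card B - Multiset.card t) 0).map (c + ·) = B := by
    rw [← hzero, hsplit, Multiset.map_map]
    rw [show ((c + ·) ∘ (· - c)) = fun x => c + (x - c) from rfl]
    conv_rhs => rw [← Multiset.map_id B]
    apply Multiset.map_congr rfl
    intro x hx
    have := hle x hx
    simp; omega
  have hfilter0 : ∀ n : ℕ, Multiset.filter (0 < ·) (Multiset.replicate n (0:ℕ)) = 0 := by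
    intro n
    rw [Multiset.filter_eq_nil]
    intro a ha
    have := Multiset.eq_of_mem_replicate ha
    omega
  have hc0 : c = 0 → t + Multiset.filter (0 < ·) (Multiset.replicate (k - Multiset.card t) (c + 0)) = B := by
    intro hc
    subst hc
    rw [hfilter0, add_zero, ht]
    have h2 : B.map (fun x => x - 0) = B := by simp
    rw [h2, Multiset.filter_eq_self.2 hpos]
  rcases Nat.eq_zero_or_pos c with hc | hc
  · specialize hc0 hc
    subst hc
    simp only [zero_add, Multiset.map_id'] at hc0 ⊢
    have : Multiset.filter (fun x => 0 < x) t = t :=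
      Multiset.filter_eq_self.2 (fun a ha => (Multiset.mem_filter.1 ha).2)
    rw [this]
    simpa using hc0
  · have hckk : Multiset.card B = k := by
      rcases hck with h | h
      · exact h
      · omega
    have h1 : Multiset.filter (0 < ·) (Multiset.map (fun x => c + x) t) = Multiset.map (fun x => c + x) t := by
      apply Multiset.filter_eq_self.2
      intro a ha
      obtain ⟨b, _, rfl⟩ := Multiset.mem_map.1 ha
      omega
    have h2 : Multiset.filter (0 < ·) (Multiset.replicate (k - Multiset.card t) (c + 0)) =
        Multiset.replicate (k - Multiset.card t) (c + 0) := by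
      apply Multiset.filter_eq_self.2
      intro a ha
      have := Multiset.eq_of_mem_replicate ha
      omega
    rw [h1, h2, ← Multiset.map_replicate, ← Multiset.map_add, ← hckk]
    exact hBmap

lemma sum_le_card_mul (s : Multiset ℕ) (d : ℕ) (hbd : ∀ x ∈ s, x ≤ d) :
    s.sum ≤ Multiset.card s * d := by
  calc s.sum = (s.map id).sum := by rw [Multiset.map_id]
  _ ≤ (s.map (fun _ => d)).sum := Multiset.sum_map_le_sum_map _ _ (fun i hi => hbd i hi)
  _ = Multiset.card s * d := by rw [Multiset.map_const', Multiset.sum_replicate, smul_eq_mul]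

lemma aux_decomp (k : ℕ) (hk : 1 ≤ k) :
    ∀ n (s : Multiset ℕ), Multiset.card s = n → (∀ x ∈ s, 0 < x) →
    ∃ (h : ℕ → ℕ) (ν : ℕ → Multiset ℕ),
      (∀ i, ∀ x ∈ ν i, 0 < x) ∧ (∀ i, Multiset.card (ν i) ≤ k) ∧
      s = ∑ i ∈ Finset.range ((Multiset.card s + k - 1) / k),
            hSum (rect (k * h i) k) (ν i) ∧
      ∑ i ∈ Finset.range ((Multiset.card s + k - 1) / k), (ν i).sum
        ≤ k * s.sup + (k - 1) * Multiset.card s := by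
  intro n
  induction n using Nat.strong_induction_on with
  | _ n IH =>
  intro s hcard hpos
  rcases Nat.eq_zero_or_pos n with hn | hn
  · -- empty
    subst hn
    have hs0 : s = 0 := Multiset.card_eq_zero.1 hcard
    refine ⟨fun _ => 0, fun _ => 0, by simp, by simp, ?_, by simp⟩
    rw [hs0]
    rw [show Multiset.card (0 : Multiset ℕ) = 0 from rfl]
    rw [Nat.div_eq_of_lt (by omega)]
    simp
  rcases le_or_gt n k with hnk | hnk
  · -- one block
    have hb : (Multiset.card s + k - 1) / k = 1 := by
      rw [hcard]
      exact Nat.div_eq_of_lt_le (by omega) (by omega)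
    have hseq : (s.map (· - 0)).filter (0 < ·) = s := by
      have h2 : s.map (fun x => x - 0) = s := by simp
      rw [h2, Multiset.filter_eq_self.2 hpos]
    have hkey := key_hSum 0 k s (by omega) (Or.inr rfl) (fun x _ => Nat.zero_le x) hpos
    rw [hseq] at hkey
    refine ⟨fun _ => 0, fun _ => s, fun _ => hpos, fun _ => by rw [hcard]; exact hnk, ?_, ?_⟩
    · rw [hb, Finset.sum_range_one, Nat.mul_zero, hkey]
    · rw [hb, Finset.sum_range_one]
      calc s.sum ≤ Multiset.card s * s.sup := sum_le_card_mul s s.sup (fun x hx => Multiset.le_sup hx)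
      _ ≤ k * s.sup := by
          apply Nat.mul_le_mul_right
          omega
      _ ≤ k * s.sup + (k - 1) * Multiset.card s := Nat.le_add_right _ _
  · -- peel off the k largest parts
    set L : List ℕ := sortD s with hL
    have hLcoe : (↑L : Multiset ℕ) = s := sortD_coe s
    have hLlen : L.length = n := by rw [← hcard, ← hLcoe]; rfl
    have hp : L.Pairwise (· ≥ ·) := by
      rw [hL, sortD]
      exact List.pairwise_reverse.2 (Multiset.pairwise_sort s (· ≤ ·))
    set T : List ℕ := L.take k with hT
    set D : List ℕ := L.drop k with hD
    have hTD : T ++ D = L := List.take_append_drop k L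
    have hpTD : (T ++ D).Pairwise (· ≥ ·) := by rw [hTD]; exact hp
    have hcross : ∀ x ∈ T, ∀ y ∈ D, x ≥ y := (List.pairwise_append.1 hpTD).2.2
    have hTlen : T.length = k := by rw [hT, List.length_take]; omega
    have hDlen : D.length = n - k := by rw [hD, List.length_drop]; omega
    have hDne : D ≠ [] := by
      intro h0
      rw [h0] at hDlen
      simp at hDlen
      omega
    obtain ⟨a, tl, hDeq⟩ := List.exists_cons_of_ne_nil hDne
    set m : ℕ := a with hm
    have hmem : m ∈ D := by rw [hDeq]; exact List.mem_cons_self (a := a) (l := tl)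
    have hmD : ∀ y ∈ D, y ≤ m := by
      have hpD : D.Pairwise (· ≥ ·) := hp.drop
      rw [hDeq] at hpD
      intro y hy
      rw [hDeq] at hy
      rcases List.eq_or_mem_of_mem_cons hy with h | h
      · omega
      · exact (List.pairwise_cons.1 hpD).1 y h
    have hmT : ∀ x ∈ T, m ≤ x := fun x hx => hcross x hx m hmem
    set B : Multiset ℕ := (↑T : Multiset ℕ) with hB
    set s' : Multiset ℕ := (↑D : Multiset ℕ) with hs'
    have hsplit : s = B + s' := by rw [hB, hs', Multiset.coe_add, hTD, hLcoe]
    have hcardB : Multiset.card B = k := by rw [hB, Multiset.coe_card, hTlen]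
    have hcards' : Multiset.card s' = n - k := by rw [hs', Multiset.coe_card, hDlen]
    have hposB : ∀ x ∈ B, 0 < x := fun x hx => hpos x (hsplit ▸ Multiset.mem_add.2 (Or.inl hx))
    have hposs' : ∀ x ∈ s', 0 < x := fun x hx => hpos x (hsplit ▸ Multiset.mem_add.2 (Or.inr hx))
    set c : ℕ := k * (m / k) with hc
    have hdm := Nat.div_add_mod m k
    have hmodm := Nat.mod_lt m (show 0 < k by omega)
    have hcm : c ≤ m := by omega
    have hmc : m ≤ c + (k - 1) := by omega
    have hcle : ∀ x ∈ B, c ≤ x := fun x hx => le_trans hcm (hmT x hx)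
    set ν₀ : Multiset ℕ := (B.map (· - c)).filter (0 < ·) with hν₀
    have hkey := key_hSum c k B (le_of_eq hcardB) (Or.inl hcardB) hcle hposB
    -- inductive hypothesis on s'
    obtain ⟨h', ν', hpos', hcard', heq', hsum'⟩ := IH (n - k) (by omega) s' hcards' hposs'
    rw [hcards'] at heq' hsum'
    refine ⟨fun i => match i with | 0 => m / k | j + 1 => h' j,
            fun i => match i with | 0 => ν₀ | j + 1 => ν' j, ?_, ?_, ?_, ?_⟩
    · intro i
      match i with
      | 0 => exact fun x hx => (Multiset.mem_filter.1 hx).2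
      | j + 1 => exact hpos' j
    · intro i
      match i with
      | 0 =>
        calc Multiset.card ν₀ ≤ Multiset.card (B.map (· - c)) :=
              Multiset.card_le_card (Multiset.filter_le _ _)
        _ = Multiset.card B := Multiset.card_map _ _
        _ = k := hcardB
      | j + 1 => exact hcard' j
    · -- decomposition equality
      have hb : (Multiset.card s + k - 1) / k = ((n - k) + k - 1) / k + 1 := by
        rw [hcard]
        rw [show n + k - 1 = ((n - k) + k - 1) + k by omega]
        rw [Nat.add_div_right _ (show 0 < k by omega)]
      rw [hb, Finset.sum_range_succ']
      simp only
      rw [← heq', ← hc, hkey]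
      rw [hsplit, add_comm]
    · -- sum bound
      have hb : (Multiset.card s + k - 1) / k = ((n - k) + k - 1) / k + 1 := by
        rw [hcard]
        rw [show n + k - 1 = ((n - k) + k - 1) + k by omega]
        rw [Nat.add_div_right _ (show 0 < k by omega)]
      rw [hb, Finset.sum_range_succ']
      simp only
      have hmu : m ≤ s.sup := Multiset.le_sup (by rw [hsplit]; exact Multiset.mem_add.2 (Or.inr hmem))
      have hu'm : s'.sup ≤ m := Multiset.sup_le.2 hmD
      have hν₀sum : ν₀.sum ≤ k * (s.sup + (k - 1) - m) := by
        have h1 : ν₀.sum ≤ (B.map (· - c)).sum := by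
          have hle' : ν₀ ≤ B.map (· - c) := Multiset.filter_le _ _
          obtain ⟨u, hu⟩ := Multiset.le_iff_exists_add.1 hle'
          calc ν₀.sum ≤ ν₀.sum + u.sum := Nat.le_add_right _ _
          _ = (ν₀ + u).sum := (Multiset.sum_add _ _).symm
          _ = (B.map (· - c)).sum := by rw [← hu]
        have h2 : (B.map (· - c)).sum ≤ (B.map (fun _ => s.sup + (k - 1) - m)).sum := by
          apply Multiset.sum_map_le_sum_map
          intro x hx
          have hxu : x ≤ s.sup := Multiset.le_sup (by rw [hsplit]; exact Multiset.mem_add.2 (Or.inl hx))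
          have := hcle x hx
          omega
        have h3 : (B.map (fun _ => s.sup + (k - 1) - m)).sum = k * (s.sup + (k - 1) - m) := by
          rw [Multiset.map_const', Multiset.sum_replicate, smul_eq_mul, hcardB]
        omega
      have e1 : k * (s.sup + (k - 1) - m) + k * m = k * (s.sup + (k - 1)) := by
        rw [← Nat.mul_add, Nat.sub_add_cancel (by omega)]
      have e2 : k * s'.sup ≤ k * m := Nat.mul_le_mul_left _ hu'm
      have e3 : k * (s.sup + (k - 1)) + (k - 1) * (n - k) = k * s.sup + (k - 1) * n := by
        rw [Nat.mul_add]
        rw [show k * (k - 1) = (k - 1) * k from Nat.mul_comm _ _]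
        rw [Nat.add_assoc, ← Nat.mul_add]
        rw [show k + (n - k) = n by omega]
      calc (∑ i ∈ Finset.range ((n - k + k - 1) / k), (ν' i).sum) + ν₀.sum
          ≤ (k * s'.sup + (k - 1) * (n - k)) + k * (s.sup + (k - 1) - m) := by
            exact Nat.add_le_add hsum' hν₀sum
        _ ≤ (k * m + (k - 1) * (n - k)) + k * (s.sup + (k - 1) - m) := by
            exact Nat.add_le_add (Nat.add_le_add e2 le_rfl) le_rfl
        _ = k * (s.sup + (k - 1)) + (k - 1) * (n - k) := by omega
        _ = k * s.sup + (k - 1) * n := e3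
        _ = k * s.sup + (k - 1) * Multiset.card s := by rw [hcard]

/-- Any partition `λ = (a₁, …, a_j)` can be written, for fixed `k ≥ 1`, as a
vertical sum over `1 ≤ i ≤ ⌈j/k⌉` of partitions `Rect(k·hᵢ, k) +_H νᵢ` with
each `νᵢ` having at most `k` parts and `Σᵢ |νᵢ| ≤ k·(a₁ + j)`. (The vertical
sum is the union of part multisets, i.e. multiset addition; `a₁ = s.sup` is
the largest part and `j = s.card` the number of parts.) -/
theorem rects_inside_decomposition (s : Multiset ℕ) (hpos : ∀ x ∈ s, 0 < x)
    (k : ℕ) (hk : 1 ≤ k) :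
    ∃ (h : ℕ → ℕ) (ν : ℕ → Multiset ℕ),
      (∀ i, ∀ x ∈ ν i, 0 < x) ∧ (∀ i, Multiset.card (ν i) ≤ k) ∧
      s = ∑ i ∈ Finset.range ((Multiset.card s + k - 1) / k),
            hSum (rect (k * h i) k) (ν i) ∧
      ∑ i ∈ Finset.range ((Multiset.card s + k - 1) / k), (ν i).sum
        ≤ k * (s.sup + Multiset.card s) := by
  obtain ⟨h, ν, h1, h2, h3, h4⟩ := aux_decomp k hk (Multiset.card s) s rfl hpos
  refine ⟨h, ν, h1, h2, h3, ?_⟩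
  calc ∑ i ∈ Finset.range ((Multiset.card s + k - 1) / k), (ν i).sum
      ≤ k * s.sup + (k - 1) * Multiset.card s := h4
    _ ≤ k * s.sup + k * Multiset.card s := by
        exact Nat.add_le_add_left (Nat.mul_le_mul_right _ (by omega)) _
    _ = k * (s.sup + Multiset.card s) := by rw [Nat.mul_add]
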